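/- Let G be the DAG of matrix-vector multiplication y = A·x for an m×m matrix A and vector x of length m: sources are the m² entries A_{j,i} and the m entries x_i; for each pair (j,i) there is an intermediate node p_{j,i} with in-edges from A_{j,i} and x_i; and for each j there is a sink node y_j with in-edges from p_{j,1}, …, p_{j,m}. If m ≥ 3 and m+3 ≤ r ≤ 2m, then OPT_PRBP(G,r) = m² + 2m (the trivial cost) while OPT_RBP(G,r) ≥ m² + 3m − 1; in particular OPT_PRBP(G,r) < OPT_RBP(G,r). -/

import Mathlib

open scoped Classical

/-! ### Directed graphs / DAGs -/

structure DirGraph (V : Type) where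
  E : V → V → Prop

namespace DirGraph

variable {V : Type}

def Acyclic (G : DirGraph V) : Prop := ∀ v, ¬ Relation.TransGen G.E v v

def IsSource (G : DirGraph V) (v : V) : Prop := ∀ u, ¬ G.E u v

def IsSink (G : DirGraph V) (v : V) : Prop := ∀ u, ¬ G.E v u

def NoIsolated (G : DirGraph V) : Prop := ∀ v, (∃ u, G.E u v) ∨ (∃ u, G.E v u)

noncomputable def inDeg (G : DirGraph V) (v : V) : ℕ := {u | G.E u v}.ncard

noncomputable def outDeg (G : DirGraph V) (v : V) : ℕ := {u | G.E v u}.ncard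

noncomputable def maxInDeg (G : DirGraph V) [Fintype V] : ℕ :=
  Finset.univ.sup G.inDeg

noncomputable def maxOutDeg (G : DirGraph V) [Fintype V] : ℕ :=
  Finset.univ.sup G.outDeg

end DirGraph

/-! ### The (one-shot) red-blue pebble game (RBP) -/

structure RBPState (V : Type) where
  red : Finset V
  blue : Finset V
  computed : Finset V

inductive RBPMove (V : Type) where
  | save : V → RBPMove V
  | load : V → RBPMove V
  | compute : V → RBPMove V
  | delete : V → RBPMove V

def RBPMove.ioCost {V : Type} : RBPMove V → ℕ
  | .save _ => 1
  | .load _ => 1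
  | _ => 0

variable {V : Type} [Fintype V] [DecidableEq V]

def RBPStep (G : DirGraph V) (r : ℕ) (s : RBPState V) :
    RBPMove V → RBPState V → Prop
  | .save v, t => v ∈ s.red ∧ t = { s with blue := insert v s.blue }
  | .load v, t => v ∈ s.blue ∧ (insert v s.red).card ≤ r ∧
      t = { s with red := insert v s.red }
  | .compute v, t => ¬ G.IsSource v ∧ v ∉ s.computed ∧
      (∀ u, G.E u v → u ∈ s.red) ∧ (insert v s.red).card ≤ r ∧
      t = { s with red := insert v s.red, computed := insert v s.computed }
  | .delete v, t => v ∈ s.red ∧ t = { s with red := s.red.erase v }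

inductive RBPReaches (G : DirGraph V) (r : ℕ) :
    RBPState V → List (RBPMove V) → RBPState V → Prop
  | nil (s : RBPState V) : RBPReaches G r s [] s
  | cons {s t u : RBPState V} {m : RBPMove V} {L : List (RBPMove V)} :
      RBPStep G r s m t → RBPReaches G r t L u → RBPReaches G r s (m :: L) u

noncomputable def RBPInit (G : DirGraph V) : RBPState V :=
  ⟨∅, Finset.univ.filter (fun v => G.IsSource v), ∅⟩

def RBPValid (G : DirGraph V) (r : ℕ) (L : List (RBPMove V)) : Prop :=
  ∃ t, RBPReaches G r (RBPInit G) L t ∧ ∀ v, G.IsSink v → v ∈ t.blue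

def RBPCost {V : Type} (L : List (RBPMove V)) : ℕ := (L.map RBPMove.ioCost).sum

noncomputable def optRBP (G : DirGraph V) (r : ℕ) : ℕ∞ :=
  sInf ((fun L => (RBPCost L : ℕ∞)) '' {L | RBPValid G r L})

/-! ### The partial-computing red-blue pebble game (PRBP) -/

structure PRBPState (V : Type) where
  lred : Finset V
  dred : Finset V
  blue : Finset V
  marked : Finset (V × V)

def PRBPState.red (s : PRBPState V) : Finset V := s.lred ∪ s.dred

inductive PRBPMove (V : Type) where
  | save : V → PRBPMove V
  | load : V → PRBPMove V
  | pcompute : V → V → PRBPMove V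
  | delete : V → PRBPMove V

def PRBPMove.ioCost {V : Type} : PRBPMove V → ℕ
  | .save _ => 1
  | .load _ => 1
  | _ => 0

def PRBPStep (G : DirGraph V) (r : ℕ) (s : PRBPState V) :
    PRBPMove V → PRBPState V → Prop
  | .save v, t => v ∈ s.dred ∧
      t = { s with lred := insert v s.lred, dred := s.dred.erase v,
                   blue := insert v s.blue }
  | .load v, t => v ∈ s.blue ∧ ((insert v s.lred) ∪ s.dred).card ≤ r ∧
      t = { s with lred := insert v s.lred }
  | .pcompute u v, t => G.E u v ∧ (u, v) ∉ s.marked ∧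
      (∀ w, G.E w u → (w, u) ∈ s.marked) ∧ u ∈ s.red ∧
      (v ∈ s.red ∨ (v ∉ s.red ∧ v ∉ s.blue)) ∧
      ((s.lred.erase v) ∪ (insert v s.dred)).card ≤ r ∧
      t = { s with lred := s.lred.erase v, dred := insert v s.dred,
                   blue := s.blue.erase v, marked := insert (u, v) s.marked }
  | .delete v, t =>
      (v ∈ s.lred ∧ t = { s with lred := s.lred.erase v }) ∨
      (v ∈ s.dred ∧ (∀ w, G.E v w → (v, w) ∈ s.marked) ∧
        t = { s with dred := s.dred.erase v })

inductive PRBPReaches (G : DirGraph V) (r : ℕ) :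
    PRBPState V → List (PRBPMove V) → PRBPState V → Prop
  | nil (s : PRBPState V) : PRBPReaches G r s [] s
  | cons {s t u : PRBPState V} {m : PRBPMove V} {L : List (PRBPMove V)} :
      PRBPStep G r s m t → PRBPReaches G r t L u → PRBPReaches G r s (m :: L) u

noncomputable def PRBPInit (G : DirGraph V) : PRBPState V :=
  ⟨∅, ∅, Finset.univ.filter (fun v => G.IsSource v), ∅⟩

def PRBPValid (G : DirGraph V) (r : ℕ) (L : List (PRBPMove V)) : Prop :=
  ∃ t, PRBPReaches G r (PRBPInit G) L t ∧ (∀ v, G.IsSink v → v ∈ t.blue) ∧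
    ∀ u v, G.E u v → (u, v) ∈ t.marked

def PRBPCost {V : Type} (L : List (PRBPMove V)) : ℕ := (L.map PRBPMove.ioCost).sum

noncomputable def optPRBP (G : DirGraph V) (r : ℕ) : ℕ∞ :=
  sInf ((fun L => (PRBPCost L : ℕ∞)) '' {L | PRBPValid G r L})

/-- `s` is a state reached by some prefix of the pebbling `L`. -/
def PRBPPrefixState (G : DirGraph V) (r : ℕ) (L : List (PRBPMove V))
    (s : PRBPState V) : Prop :=
  ∃ L₁ L₂, L = L₁ ++ L₂ ∧ PRBPReaches G r (PRBPInit G) L₁ s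

/-! ### Paths, dominators, S-partitions -/

/-- A directed path in `G` starting at a source node. -/
def IsSourcePath (G : DirGraph V) (p : List V) : Prop :=
  p ≠ [] ∧ p.Chain' G.E ∧ ∀ h : p ≠ [], G.IsSource (p.head h)

/-- `D` is a dominator for the node set `V₀`. -/
def Dominates (G : DirGraph V) (D : Set V) (V₀ : Set V) : Prop :=
  ∀ p : List V, IsSourcePath G p → ∀ h : p ≠ [], p.getLast h ∈ V₀ →
    ∃ d ∈ D, d ∈ p

/-- The path `p` contains an edge of `E₀` (two consecutive nodes forming it). -/
def PathContainsEdge (p : List V) (E₀ : Set (V × V)) : Prop :=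
  ∃ u v, (u, v) ∈ E₀ ∧ [u, v] <:+: p

/-- `D` is an edge-dominator for the edge set `E₀`. -/
def EdgeDominates (G : DirGraph V) (D : Set V) (E₀ : Set (V × V)) : Prop :=
  ∀ p : List V, IsSourcePath G p → PathContainsEdge p E₀ → ∃ d ∈ D, d ∈ p

/-- The terminal set of a node set `V₀`: nodes of `V₀` with no out-neighbor in `V₀`. -/
def terminalSet (G : DirGraph V) (V₀ : Set V) : Set V :=
  {v | v ∈ V₀ ∧ ∀ w, G.E v w → w ∉ V₀}

/-- The edge-terminal set of an edge set `E₀`. -/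
def edgeTerminalSet (E₀ : Set (V × V)) : Set V :=
  {v | (∃ u, (u, v) ∈ E₀) ∧ ∀ w, (v, w) ∉ E₀}

/-- An `S`-partition of the DAG `G` (Hong–Kung). -/
def IsSPartition (G : DirGraph V) (S : ℕ) (k : ℕ) (P : Fin k → Set V) : Prop :=
  (∀ v : V, ∃! i, v ∈ P i) ∧
  (∀ i j : Fin k, j < i → ∀ u v, u ∈ P i → v ∈ P j → ¬ G.E u v) ∧
  (∀ i, ∃ D : Set V, D.ncard ≤ S ∧ Dominates G D (P i)) ∧
  (∀ i, (terminalSet G (P i)).ncard ≤ S)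

/-- An `S`-dominator partition of the DAG `G`: an `S`-partition without the
terminal-set condition. -/
def IsSDomPartition (G : DirGraph V) (S : ℕ) (k : ℕ) (P : Fin k → Set V) : Prop :=
  (∀ v : V, ∃! i, v ∈ P i) ∧
  (∀ i j : Fin k, j < i → ∀ u v, u ∈ P i → v ∈ P j → ¬ G.E u v) ∧
  (∀ i, ∃ D : Set V, D.ncard ≤ S ∧ Dominates G D (P i))

/-- An `S`-edge partition of the DAG `G`. -/
def IsSEdgePartition (G : DirGraph V) (S : ℕ) (k : ℕ)
    (P : Fin k → Set (V × V)) : Prop :=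
  (∀ i, P i ⊆ {e | G.E e.1 e.2}) ∧
  (∀ u v, G.E u v → ∃! i, (u, v) ∈ P i) ∧
  (∀ i j : Fin k, i < j → ∀ u v w, G.E u v → G.E v w →
      ¬ ((v, w) ∈ P i ∧ (u, v) ∈ P j)) ∧
  (∀ i, ∃ D : Set V, D.ncard ≤ S ∧ EdgeDominates G D (P i)) ∧
  (∀ i, (edgeTerminalSet (P i)).ncard ≤ S)

noncomputable def minEdgePartition (G : DirGraph V) (S : ℕ) : ℕ :=
  sInf {k | ∃ P : Fin k → Set (V × V), IsSEdgePartition G S k P}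

noncomputable def minDomPartition (G : DirGraph V) (S : ℕ) : ℕ :=
  sInf {k | ∃ P : Fin k → Set V, IsSDomPartition G S k P}

noncomputable def minSPartition (G : DirGraph V) (S : ℕ) : ℕ :=
  sInf {k | ∃ P : Fin k → Set V, IsSPartition G S k P}
/-- Nodes of the matrix-vector multiplication DAG `y = A·x` for an `m × m`
matrix: entries `A_{j,i}` (left), entries `x_i`, products `p_{j,i}`, sinks `y_j`. -/
abbrev MVNode (m : ℕ) := (Fin m × Fin m) ⊕ (Fin m ⊕ ((Fin m × Fin m) ⊕ Fin m))

def MVG (m : ℕ) : DirGraph (MVNode m) :=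
  ⟨fun a b =>
    match a, b with
    | Sum.inl ji, Sum.inr (Sum.inr (Sum.inl ji')) => ji' = ji
    | Sum.inr (Sum.inl i), Sum.inr (Sum.inr (Sum.inl ji)) => ji.2 = i
    | Sum.inr (Sum.inr (Sum.inl ji)), Sum.inr (Sum.inr (Sum.inr j)) => ji.1 = j
    | _, _ => False⟩


/-!
In PRBP the trivial cost is attained column by column: load `x_i` and, for each `j`, load
`A_{j,i}`, fold it and `x_i` into `p_{j,i}`, fold `p_{j,i}` into the partially computed `y_j`, and
discard `A_{j,i}` and `p_{j,i}`. Besides the `y_j` only `x_i`, `A_{j,i}` and `p_{j,i}` are ever red,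
so `m + 3` red pebbles suffice; the `y_j` are saved at the end. Conversely every source has to be
loaded and every sink saved.

In one-shot RBP, computing `y_j` needs all `m` products `p_{j,·}` red at once. Just after `y_j` is
computed, `m + 1` red pebbles lie on `y_j` and these products; if the next sink `y_{j'}` were
computed without loading any `x_i` or `p_{·,·}` in between, every `p_{j',i}` or its input `x_i`
would already be red too, i.e. `2m + 1 > r` red pebbles. So each of the `m - 1` gaps between
consecutive sink computations contains a load of a non-matrix node, on top of the `m` loads of the
`x_i` before the first sink is computed, the `m²` loads of matrix entries and the `m` saves.
-/

theorem Nat.exists_not_and_succ_of_le {P : ℕ → Prop} {a b : ℕ} (hab : a ≤ b) (ha : ¬ P a)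
    (hb : P b) : ∃ k, a ≤ k ∧ k < b ∧ ¬ P k ∧ P (k + 1) := by
  induction b, hab using Nat.le_induction with
  | base => exact absurd hb ha
  | succ b hab ih =>
    by_cases hP : P b
    · obtain ⟨k, h₁, h₂, h₃⟩ := ih hP
      exact ⟨k, h₁, by omega, h₃⟩
    · exact ⟨b, hab, by omega, hP, hb⟩

theorem Finset.card_le_card_filter_between_add_one {α : Type*} [LinearOrder α] {T Q : Finset α}
    {lo hi : α} (hT : ∀ t ∈ T, lo ≤ t ∧ t ≤ hi)
    (hgap : ∀ s ∈ T, ∀ t ∈ T, s < t → ∃ q ∈ Q, s < q ∧ q < t) :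
    T.card ≤ (Q.filter fun q => lo < q ∧ q < hi).card + 1 := by
  induction T using Finset.induction_on_max generalizing hi with
  | empty => simp
  | insert b T hlt ih =>
    rw [Finset.card_insert_of_notMem fun hb => (hlt b hb).false]
    rcases T.eq_empty_or_nonempty with rfl | hne
    · simp
    set c := T.max' hne
    have hc : c ∈ T := T.max'_mem hne
    obtain ⟨q, hq, hcq, hqb⟩ := hgap c (Finset.mem_insert_of_mem hc) b
      (Finset.mem_insert_self b T) (hlt c hc)
    have hbhi := (hT b (Finset.mem_insert_self b T)).2
    have hT' := ih (hi := c)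
      (fun t ht => ⟨(hT t (Finset.mem_insert_of_mem ht)).1, T.le_max' t ht⟩)
      fun s hs t ht => hgap s (Finset.mem_insert_of_mem hs) t (Finset.mem_insert_of_mem ht)
    have hsub : insert q (Q.filter fun q => lo < q ∧ q < c) ⊆
        Q.filter fun q => lo < q ∧ q < hi := by
      intro z hz
      simp only [Finset.mem_insert, Finset.mem_filter] at hz ⊢
      rcases hz with rfl | ⟨hzQ, hlo, hzc⟩
      · exact ⟨hq, (hT c (Finset.mem_insert_of_mem hc)).1.trans_lt hcq, hqb.trans_le hbhi⟩
      · exact ⟨hzQ, hlo, hzc.trans ((hlt c hc).trans_le hbhi)⟩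
    have := Finset.card_le_card hsub
    rw [Finset.card_insert_of_notMem (by simp [hcq.not_gt])] at this
    omega

namespace List

variable {α : Type*} {L : List α}

theorem card_le_sum_map_of_mem [DecidableEq α] {f : α → ℕ} {S : Finset α}
    (hS : ∀ a ∈ S, a ∈ L ∧ 1 ≤ f a) : S.card ≤ (L.map f).sum := by
  rw [Finset.sum_list_map_count]
  calc S.card ≤ ∑ a ∈ S, f a := by
        simpa using Finset.card_nsmul_le_sum S f 1 fun a ha => (hS a ha).2
    _ ≤ ∑ a ∈ S, L.count a • f a := Finset.sum_le_sum fun a ha =>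
        Nat.le_mul_of_pos_left _ (List.count_pos_iff.2 (hS a ha).1)
    _ ≤ ∑ a ∈ L.toFinset, L.count a • f a :=
        Finset.sum_le_sum_of_subset fun a ha => List.mem_toFinset.2 (hS a ha).1

variable (L) in
noncomputable def positions (p : α → Prop) : Finset ℕ :=
  (Finset.range L.length).filter fun k => ∃ a, L[k]? = some a ∧ p a

theorem mem_positions {p : α → Prop} {k : ℕ} :
    k ∈ L.positions p ↔ ∃ a, L[k]? = some a ∧ p a := by
  simp only [positions, Finset.mem_filter, Finset.mem_range, and_iff_right_iff_imp]
  rintro ⟨a, ha, -⟩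
  exact (getElem?_eq_some_iff.1 ha).1

theorem card_positions_le_sum_map {p : α → Prop} {f : α → ℕ}
    (hf : ∀ a, p a → 1 ≤ f a) :
    (L.positions p).card ≤ (L.map f).sum := by
  set g : ℕ → ℕ := fun k => (L[k]?.map f).getD 0
  have hg : ∀ k ∈ L.positions p, 1 ≤ g k := fun k hk => by
    obtain ⟨a, ha, hpa⟩ := mem_positions.1 hk
    simpa [g, ha] using hf a hpa
  calc (L.positions p).card ≤ ∑ k ∈ L.positions p, g k := by
        simpa using Finset.card_nsmul_le_sum _ g 1 hg
    _ ≤ ∑ k ∈ Finset.range L.length, g k :=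
        Finset.sum_le_sum_of_subset (Finset.filter_subset _ _)
    _ = (L.map f).sum := by simp [Finset.sum_range, g]

theorem card_positions_or {p q : α → Prop} (hpq : ∀ a, p a → ¬ q a) :
    (L.positions fun a => p a ∨ q a).card = (L.positions p).card + (L.positions q).card := by
  rw [← Finset.card_union_of_disjoint]
  · congr 1
    ext k
    simp only [Finset.mem_union, mem_positions]
    aesop
  · rw [Finset.disjoint_left]
    intro k hp hq
    obtain ⟨a, ha, hpa⟩ := mem_positions.1 hp
    obtain ⟨b, hb, hqb⟩ := mem_positions.1 hq
    obtain rfl : a = b := by simpa [ha] using hb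
    exact hpq a hpa hqb

theorem injective_of_getElem? {ι : Type*} {pos : ι → ℕ} {g : ι → α} (hg : g.Injective)
    (hpos : ∀ i, L[pos i]? = some (g i)) : pos.Injective :=
  fun i i' h => hg <| Option.some_injective _ <| by rw [← hpos, ← hpos, h]

theorem card_le_card_of_getElem? {ι : Type*} [Fintype ι] {pos : ι → ℕ} {g : ι → α}
    {S : Finset ℕ} (hg : g.Injective) (hpos : ∀ i, L[pos i]? = some (g i))
    (hS : ∀ i, pos i ∈ S) : Fintype.card ι ≤ S.card := by
  rw [← Finset.card_univ, ← Finset.card_image_of_injective _ (injective_of_getElem? hg hpos)]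
  exact Finset.card_le_card fun k hk => by
    obtain ⟨i, -, rfl⟩ := Finset.mem_image.1 hk
    exact hS i

end List

section PRBP

variable {α : Type} [DecidableEq α] {G : DirGraph α} {r : ℕ} {s t : PRBPState α}
  {mv : PRBPMove α} {L : List (PRBPMove α)} {u v : α}

theorem PRBPStep.mem_red (h : PRBPStep G r s mv t) (hu : u ∈ t.red) :
    u ∈ s.red ∨ mv = .load u ∨ ∃ w, mv = .pcompute w u ∧ G.E w u := by
  cases mv with
  | save w => obtain ⟨hw, rfl⟩ := h; simp [PRBPState.red] at hu ⊢; aesop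
  | load w => obtain ⟨-, -, rfl⟩ := h; simp [PRBPState.red] at hu ⊢; aesop
  | pcompute w x => obtain ⟨hE, -, -, -, -, -, rfl⟩ := h; simp [PRBPState.red] at hu ⊢; aesop
  | delete w =>
    rcases h with ⟨-, rfl⟩ | ⟨-, -, rfl⟩ <;> simp [PRBPState.red] at hu ⊢ <;> tauto

theorem PRBPStep.mem_marked (h : PRBPStep G r s mv t) (huv : (u, v) ∈ t.marked) :
    (u, v) ∈ s.marked ∨ u ∈ s.red := by
  cases mv with
  | save w => obtain ⟨-, rfl⟩ := h; exact .inl huv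
  | load w => obtain ⟨-, -, rfl⟩ := h; exact .inl huv
  | pcompute w x => obtain ⟨-, -, -, hw, -, -, rfl⟩ := h; simp at huv; aesop
  | delete w => rcases h with ⟨-, rfl⟩ | ⟨-, -, rfl⟩ <;> exact .inl huv

theorem PRBPStep.mem_blue (h : PRBPStep G r s mv t) (hv : v ∈ t.blue) :
    v ∈ s.blue ∨ mv = .save v := by
  cases mv with
  | save w => obtain ⟨-, rfl⟩ := h; simp at hv; tauto
  | load w => obtain ⟨-, -, rfl⟩ := h; exact .inl hv
  | pcompute w x => obtain ⟨-, -, -, -, -, -, rfl⟩ := h; exact .inl (Finset.mem_of_mem_erase hv)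
  | delete w => rcases h with ⟨-, rfl⟩ | ⟨-, -, rfl⟩ <;> exact .inl hv

theorem PRBPStep.pcompute_of_notMem (huv : G.E u v) (hfresh : (u, v) ∉ s.marked)
    (hin : ∀ w, G.E w u → (w, u) ∈ s.marked) (hu : u ∈ s.red) (hvl : v ∉ s.lred)
    (hvb : v ∉ s.blue) (hcard : (s.lred ∪ insert v s.dred).card ≤ r) :
    PRBPStep G r s (.pcompute u v)
      ⟨s.lred, insert v s.dred, s.blue, insert (u, v) s.marked⟩ := by
  refine ⟨huv, hfresh, hin, hu, ?_, by rwa [Finset.erase_eq_of_notMem hvl], ?_⟩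
  · by_cases hv : v ∈ s.red <;> tauto
  · rw [Finset.erase_eq_of_notMem hvl, Finset.erase_eq_of_notMem hvb]

theorem PRBPReaches.load_mem_of_isSource (h : PRBPReaches G r s L t) (hu : G.IsSource u)
    (ht : u ∈ t.red ∨ (u, v) ∈ t.marked) :
    u ∈ s.red ∨ (u, v) ∈ s.marked ∨ .load u ∈ L := by
  induction h with
  | nil => tauto
  | cons hstep _ ih =>
    rcases ih ht with hred | hmarked | hload
    · rcases hstep.mem_red hred with h | rfl | ⟨w, -, hw⟩
      exacts [.inl h, .inr (.inr List.mem_cons_self), (hu w hw).elim]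
    · rcases hstep.mem_marked hmarked with h | h
      exacts [.inr (.inl h), .inl h]
    · exact .inr (.inr (List.mem_cons_of_mem _ hload))

theorem PRBPReaches.save_mem (h : PRBPReaches G r s L t) (hv : v ∈ t.blue) :
    v ∈ s.blue ∨ .save v ∈ L := by
  induction h with
  | nil => exact .inl hv
  | cons hstep _ ih =>
    rcases ih hv with h | h
    · rcases hstep.mem_blue h with h | rfl
      exacts [.inl h, .inr List.mem_cons_self]
    · exact .inr (List.mem_cons_of_mem _ h)

theorem PRBPReaches.append {w : PRBPState α} {L' : List (PRBPMove α)}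
    (h₁ : PRBPReaches G r s L t) (h₂ : PRBPReaches G r t L' w) :
    PRBPReaches G r s (L ++ L') w := by
  induction h₁ with
  | nil => exact h₂
  | cons hstep _ ih => exact .cons hstep (ih h₂)

theorem PRBPReaches.flatMap {β : Type} (f : β → List (PRBPMove α))
    (st : List β → PRBPState α) (l : List β)
    (h : ∀ l₁ b l₂, l = l₁ ++ b :: l₂ →
      PRBPReaches G r (st l₁) (f b) (st (l₁ ++ [b]))) :
    PRBPReaches G r (st []) (l.flatMap f) (st l) := by
  induction l using List.reverseRecOn with
  | nil => exact .nil _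
  | append_singleton l b ih =>
    rw [List.flatMap_append, List.flatMap_singleton]
    exact (ih fun l₁ b' l₂ hl => h l₁ b' (l₂ ++ [b]) (by simp [hl])).append (h l b [] rfl)

theorem PRBPReaches.saves {l : List α} (hl : l.Nodup) (hs : ∀ v ∈ l, v ∈ s.dred) :
    PRBPReaches G r s (l.map .save)
      ⟨s.lred ∪ l.toFinset, s.dred \ l.toFinset, s.blue ∪ l.toFinset, s.marked⟩ := by
  induction l generalizing s with
  | nil => simpa using .nil s
  | cons v l ih =>
    rw [List.nodup_cons] at hl
    have hstep : PRBPStep G r s (.save v)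
        ⟨insert v s.lred, s.dred.erase v, insert v s.blue, s.marked⟩ :=
      ⟨hs v List.mem_cons_self, rfl⟩
    convert PRBPReaches.cons hstep (ih hl.2 fun w hw => Finset.mem_erase.2
      ⟨fun h => hl.1 (h ▸ hw), hs w (List.mem_cons_of_mem _ hw)⟩) using 2 <;> ext <;> simp
    tauto

end PRBP

section PRBPValid

variable {G : DirGraph V} {r : ℕ} {L : List (PRBPMove V)} {u v : V}

theorem PRBPValid.load_mem (hL : PRBPValid G r L) (hu : G.IsSource u) (huv : G.E u v) :
    .load u ∈ L := by
  obtain ⟨t, ht, -, hmarked⟩ := hL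
  simpa [PRBPInit, PRBPState.red] using ht.load_mem_of_isSource hu (.inr (hmarked u v huv))

theorem PRBPValid.save_mem (hL : PRBPValid G r L) (hv : G.IsSink v) (hv' : ¬ G.IsSource v) :
    .save v ∈ L := by
  obtain ⟨t, ht, hsink, -⟩ := hL
  simpa [PRBPInit, hv'] using ht.save_mem (hsink v hv)

theorem PRBPValid.card_sources_add_card_sinks_le (hG : G.NoIsolated) (hL : PRBPValid G r L) :
    (Finset.univ.filter G.IsSource).card + (Finset.univ.filter G.IsSink).card ≤
      PRBPCost L := by
  have hsrc : ∀ v, G.IsSource v → ∃ w, G.E v w := fun v hv =>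
    (hG v).resolve_left fun ⟨w, hw⟩ => hv w hw
  have hsink : ∀ v, G.IsSink v → ¬ G.IsSource v := fun v hv hv' =>
    (hG v).elim (fun ⟨w, hw⟩ => hv' w hw) fun ⟨w, hw⟩ => hv w hw
  have hdisj : Disjoint ((Finset.univ.filter G.IsSource).image PRBPMove.load)
      ((Finset.univ.filter G.IsSink).image PRBPMove.save) := by
    simp [Finset.disjoint_left]
  rw [← Finset.card_image_of_injective _ fun _ _ => PRBPMove.load.inj,
    ← Finset.card_image_of_injective (Finset.univ.filter G.IsSink) fun _ _ => PRBPMove.save.inj,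
    ← Finset.card_union_of_disjoint hdisj]
  refine List.card_le_sum_map_of_mem fun mv hmv => ?_
  simp only [Finset.mem_union, Finset.mem_image, Finset.mem_filter, Finset.mem_univ,
    true_and] at hmv
  rcases hmv with ⟨v, hv, rfl⟩ | ⟨v, hv, rfl⟩
  · obtain ⟨w, hw⟩ := hsrc v hv
    exact ⟨hL.load_mem hv hw, le_rfl⟩
  · exact ⟨hL.save_mem hv (hsink v hv), le_rfl⟩

end PRBPValid

section RBPTrace

variable {α : Type} [DecidableEq α] {G : DirGraph α} {r : ℕ} {s t : RBPState α}
  {mv : RBPMove α} {L : List (RBPMove α)} {v : α} {a b k : ℕ}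

def RBPState.apply (s : RBPState α) : RBPMove α → RBPState α
  | .save v => { s with blue := insert v s.blue }
  | .load v => { s with red := insert v s.red }
  | .compute v => { s with red := insert v s.red, computed := insert v s.computed }
  | .delete v => { s with red := s.red.erase v }

def RBPEnabled (G : DirGraph α) (r : ℕ) (s : RBPState α) : RBPMove α → Prop
  | .save v => v ∈ s.red
  | .load v => v ∈ s.blue ∧ (insert v s.red).card ≤ r
  | .compute v => ¬ G.IsSource v ∧ v ∉ s.computed ∧
      (∀ u, G.E u v → u ∈ s.red) ∧ (insert v s.red).card ≤ r
  | .delete v => v ∈ s.red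

theorem RBPStep_iff : RBPStep G r s mv t ↔ RBPEnabled G r s mv ∧ t = s.apply mv := by
  cases mv <;> simp [RBPStep, RBPEnabled, RBPState.apply, and_assoc]

def rbpTrace (s : RBPState α) (L : List (RBPMove α)) (k : ℕ) : RBPState α :=
  (L.take k).foldl RBPState.apply s

@[simp] theorem rbpTrace_zero (s : RBPState α) (L : List (RBPMove α)) :
    rbpTrace s L 0 = s := rfl

@[simp] theorem rbpTrace_cons_succ (s : RBPState α) (mv : RBPMove α) (L : List (RBPMove α))
    (k : ℕ) : rbpTrace s (mv :: L) (k + 1) = rbpTrace (s.apply mv) L k := rfl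

theorem rbpTrace_succ (s : RBPState α) (L : List (RBPMove α)) (k : ℕ) :
    rbpTrace s L (k + 1) = L[k]?.elim (rbpTrace s L k) (rbpTrace s L k).apply := by
  cases h : L[k]? <;> simp [rbpTrace, List.take_add_one, h]

theorem RBPReaches.rbpTrace_spec (h : RBPReaches G r s L t) :
    t = rbpTrace s L L.length ∧
      ∀ k mv, L[k]? = some mv → RBPEnabled G r (rbpTrace s L k) mv := by
  induction h with
  | nil => simp
  | @cons s _ _ mv L hstep _ ih =>
    obtain ⟨hen, rfl⟩ := RBPStep_iff.1 hstep
    refine ⟨by simpa using ih.1, fun k mv' hk => ?_⟩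
    cases k with
    | zero =>
      obtain rfl : mv = mv' := by simpa using hk
      exact hen
    | succ k => simpa using ih.2 k mv' (by simpa using hk)

theorem mem_red_rbpTrace_succ (h : v ∈ (rbpTrace s L (k + 1)).red) :
    v ∈ (rbpTrace s L k).red ∨ L[k]? = some (.load v) ∨ L[k]? = some (.compute v) := by
  rw [rbpTrace_succ] at h
  cases hk : L[k]? with
  | none => simp_all
  | some mv => cases mv <;> simp [hk, RBPState.apply] at h ⊢ <;> tauto

theorem mem_blue_rbpTrace_succ (h : v ∈ (rbpTrace s L (k + 1)).blue) :
    v ∈ (rbpTrace s L k).blue ∨ L[k]? = some (.save v) := by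
  rw [rbpTrace_succ] at h
  cases hk : L[k]? with
  | none => simp_all
  | some mv => cases mv <;> simp [hk, RBPState.apply] at h ⊢ <;> tauto

theorem exists_load_or_compute_of_mem_red (hab : a ≤ b) (ha : v ∉ (rbpTrace s L a).red)
    (hb : v ∈ (rbpTrace s L b).red) :
    ∃ k, a ≤ k ∧ k < b ∧ (L[k]? = some (.load v) ∨ L[k]? = some (.compute v)) := by
  obtain ⟨k, hak, hkb, hk, hk'⟩ :=
    Nat.exists_not_and_succ_of_le (P := fun k => v ∈ (rbpTrace s L k).red) hab ha hb
  exact ⟨k, hak, hkb, (mem_red_rbpTrace_succ hk').resolve_left hk⟩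

theorem exists_save_of_mem_blue (hab : a ≤ b) (ha : v ∉ (rbpTrace s L a).blue)
    (hb : v ∈ (rbpTrace s L b).blue) : ∃ k, a ≤ k ∧ k < b ∧ L[k]? = some (.save v) := by
  obtain ⟨k, hak, hkb, hk, hk'⟩ :=
    Nat.exists_not_and_succ_of_le (P := fun k => v ∈ (rbpTrace s L k).blue) hab ha hb
  exact ⟨k, hak, hkb, (mem_blue_rbpTrace_succ hk').resolve_left hk⟩

end RBPTrace

section RBPLegal

variable {G : DirGraph V} {r : ℕ} {L : List (RBPMove V)} {u v : V} {b c : ℕ}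

def RBPLegal (G : DirGraph V) (r : ℕ) (L : List (RBPMove V)) : Prop :=
  ∀ k mv, L[k]? = some mv → RBPEnabled G r (rbpTrace (RBPInit G) L k) mv

theorem RBPValid.legal (hL : RBPValid G r L) : RBPLegal G r L :=
  let ⟨_, h, _⟩ := hL
  h.rbpTrace_spec.2

theorem RBPValid.exists_save (hL : RBPValid G r L) (hv : G.IsSink v) (hv' : ¬ G.IsSource v) :
    ∃ k : ℕ, L[k]? = some (.save v) := by
  obtain ⟨t, h, hsink⟩ := hL
  obtain ⟨k, -, -, hk⟩ := exists_save_of_mem_blue (Nat.zero_le _)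
    (by simpa [RBPInit] using hv') (h.rbpTrace_spec.1 ▸ hsink v hv)
  exact ⟨k, hk⟩

theorem RBPLegal.exists_load_of_isSource (hL : RBPLegal G r L) (hv : G.IsSource v)
    (hb : v ∈ (rbpTrace (RBPInit G) L b).red) : ∃ k < b, L[k]? = some (.load v) := by
  obtain ⟨k, -, hkb, hk | hk⟩ := exists_load_or_compute_of_mem_red (Nat.zero_le b)
    (by simp [RBPInit]) hb
  · exact ⟨k, hkb, hk⟩
  · exact absurd hv (hL k _ hk).1

theorem RBPLegal.exists_compute_of_not_isSource (hL : RBPLegal G r L) (hv : ¬ G.IsSource v)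
    (hb : v ∈ (rbpTrace (RBPInit G) L b).red) : ∃ k < b, L[k]? = some (.compute v) := by
  induction b using Nat.strong_induction_on with
  | _ b ih =>
    obtain ⟨k, -, hkb, hk | hk⟩ := exists_load_or_compute_of_mem_red (Nat.zero_le b)
      (by simp [RBPInit]) hb
    · obtain ⟨k', -, hk'k, hk'⟩ := exists_save_of_mem_blue (Nat.zero_le k)
        (by simpa [RBPInit] using hv) (hL k _ hk).1
      obtain ⟨k'', hk''k', hk''⟩ := ih k' (by omega) (hL k' _ hk')
      exact ⟨k'', by omega, hk''⟩
    · exact ⟨k, hkb, hk⟩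

theorem RBPLegal.exists_load_before_compute (hL : RBPLegal G r L) (hu : G.IsSource u)
    (huv : Relation.TransGen G.E u v) (hc : L[c]? = some (.compute v)) :
    ∃ k < c, L[k]? = some (.load u) := by
  induction huv generalizing c with
  | single huv => exact hL.exists_load_of_isSource hu ((hL c _ hc).2.2.1 u huv)
  | @tail w v huw hwv ih =>
    have hw : ¬ G.IsSource w := fun hw => by
      obtain ⟨w', -, hw'⟩ := Relation.TransGen.tail'_iff.1 huw
      exact hw _ hw'
    obtain ⟨c', hc'c, hc'⟩ := hL.exists_compute_of_not_isSource hw ((hL c _ hc).2.2.1 w hwv)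
    obtain ⟨k, hkc', hk⟩ := ih hc'
    exact ⟨k, hkc'.trans hc'c, hk⟩

end RBPLegal

section Opt

variable {G : DirGraph V} {r : ℕ}

theorem optPRBP_le_cost {L : List (PRBPMove V)} (hL : PRBPValid G r L) :
    optPRBP G r ≤ PRBPCost L :=
  sInf_le ⟨L, hL, rfl⟩

theorem le_optPRBP_of_forall {n : ℕ} (h : ∀ L, PRBPValid G r L → n ≤ PRBPCost L) :
    (n : ℕ∞) ≤ optPRBP G r :=
  le_sInf <| by rintro _ ⟨L, hL, rfl⟩; exact Nat.cast_le.2 (h L hL)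

theorem le_optRBP_of_forall {n : ℕ} (h : ∀ L, RBPValid G r L → n ≤ RBPCost L) :
    (n : ℕ∞) ≤ optRBP G r :=
  le_sInf <| by rintro _ ⟨L, hL, rfl⟩; exact Nat.cast_le.2 (h L hL)

end Opt

namespace MVNode

variable {m : ℕ}

abbrev a (j i : Fin m) : MVNode m := Sum.inl (j, i)
abbrev x (i : Fin m) : MVNode m := Sum.inr (Sum.inl i)
abbrev p (j i : Fin m) : MVNode m := Sum.inr (Sum.inr (Sum.inl (j, i)))
abbrev y (j : Fin m) : MVNode m := Sum.inr (Sum.inr (Sum.inr j))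

end MVNode

namespace MVG

open MVNode

variable {m r : ℕ}

theorem E_iff {u v : MVNode m} : (MVG m).E u v ↔
    (∃ j i, u = a j i ∧ v = p j i) ∨ (∃ j i, u = x i ∧ v = p j i) ∨
      ∃ j i, u = p j i ∧ v = y j := by
  rcases u with ⟨j, i⟩ | i | ⟨j, i⟩ | j <;>
    rcases v with ⟨j', i'⟩ | i' | ⟨j', i'⟩ | j' <;>
    simp [MVG, Prod.ext_iff, eq_comm]

theorem E_a_p (j i : Fin m) : (MVG m).E (a j i) (p j i) := rfl
theorem E_x_p (j i : Fin m) : (MVG m).E (x i) (p j i) := rfl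
theorem E_p_y (j i : Fin m) : (MVG m).E (p j i) (y j) := rfl

theorem transGen_a_y (j i : Fin m) : Relation.TransGen (MVG m).E (a j i) (y j) :=
  .tail (.single (E_a_p j i)) (E_p_y j i)

theorem transGen_x_y (j i : Fin m) : Relation.TransGen (MVG m).E (x i) (y j) :=
  .tail (.single (E_x_p j i)) (E_p_y j i)

theorem isSource_iff {v : MVNode m} :
    (MVG m).IsSource v ↔ (∃ j i, v = a j i) ∨ ∃ i, v = x i := by
  rcases v with ⟨j, i⟩ | i | ⟨j, i⟩ | j <;> simp [DirGraph.IsSource, E_iff]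
  exact ⟨j⟩

theorem isSource_a (j i : Fin m) : (MVG m).IsSource (a j i) := isSource_iff.2 (.inl ⟨j, i, rfl⟩)
theorem isSource_x (i : Fin m) : (MVG m).IsSource (x i) := isSource_iff.2 (.inr ⟨i, rfl⟩)
theorem not_isSource_y (j : Fin m) : ¬ (MVG m).IsSource (y j) := by simp [isSource_iff]

theorem isSink_iff {v : MVNode m} : (MVG m).IsSink v ↔ ∃ j, v = y j := by
  rcases v with ⟨j, i⟩ | i | ⟨j, i⟩ | j <;> simp [DirGraph.IsSink, E_iff]
  exact ⟨i⟩

theorem noIsolated : (MVG m).NoIsolated := by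
  rintro (⟨j, i⟩ | i | ⟨j, i⟩ | j)
  exacts [.inr ⟨_, E_a_p j i⟩, .inr ⟨_, E_x_p i i⟩, .inl ⟨_, E_a_p j i⟩,
    .inl ⟨_, E_p_y j j⟩]

theorem card_sources : (Finset.univ.filter (MVG m).IsSource).card = m ^ 2 + m := by
  have : Finset.univ.filter (MVG m).IsSource = Finset.univ.disjSum (Finset.univ.disjSum ∅) := by
    ext (⟨j, i⟩ | i | ⟨j, i⟩ | j) <;> simp [isSource_iff]
  simp [this, Finset.card_disjSum, sq]

theorem card_sinks : (Finset.univ.filter (MVG m).IsSink).card = m := by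
  have : Finset.univ.filter (MVG m).IsSink =
      Finset.disjSum ∅ (Finset.disjSum ∅ (Finset.disjSum ∅ Finset.univ)) := by
    ext (⟨j, i⟩ | i | ⟨j, i⟩ | j) <;> simp [isSink_iff]
  simp [this]

section Strategy

def productEdges (j i : Fin m) : Finset (MVNode m × MVNode m) :=
  {(a j i, p j i), (x i, p j i), (p j i, y j)}

def doneEdges (F : Finset (Fin m × Fin m)) : Finset (MVNode m × MVNode m) :=
  F.biUnion fun ji => productEdges ji.1 ji.2

/-- The state of the strategy once the products `p_{j,i}`, `(j, i) ∈ F`, have been folded into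
their sinks: those sinks are partially computed (dark red), and `lred` holds the light red
pebbles. -/
noncomputable def strategyState (lred : Finset (MVNode m)) (F : Finset (Fin m × Fin m)) :
    PRBPState (MVNode m) :=
  ⟨lred, F.image fun ji => y ji.1, Finset.univ.filter (MVG m).IsSource, doneEdges F⟩

def entryMoves (j i : Fin m) : List (PRBPMove (MVNode m)) :=
  [.load (a j i), .pcompute (a j i) (p j i), .pcompute (x i) (p j i), .delete (a j i),
    .pcompute (p j i) (y j), .delete (p j i)]

def columnMoves (i : Fin m) : List (PRBPMove (MVNode m)) :=
  .load (x i) :: ((List.finRange m).flatMap (entryMoves · i) ++ [.delete (x i)])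

def strategy (m : ℕ) : List (PRBPMove (MVNode m)) :=
  (List.finRange m).flatMap columnMoves ++ ((List.finRange m).map y).map .save

theorem card_le_of_subset_union_sinks {T U : Finset (MVNode m)}
    (hT : T ⊆ U ∪ Finset.univ.image y) : T.card ≤ U.card + m :=
  (Finset.card_le_card hT).trans <| (Finset.card_union_le _ _).trans <|
    Nat.add_le_add_left (Finset.card_image_le.trans (by simp)) _

theorem reaches_entryMoves (hr : m + 3 ≤ r) {F : Finset (Fin m × Fin m)} {j i : Fin m}
    (hji : (j, i) ∉ F) :
    PRBPReaches (MVG m) r (strategyState {x i} F) (entryMoves j i)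
      (strategyState {x i} (insert (j, i) F)) := by
  have hcard : ∀ T : Finset (MVNode m), T ⊆ {x i, a j i, p j i} ∪ Finset.univ.image y →
      T.card ≤ r := fun T hT => by
    have := Finset.card_le_three (a := x i) (b := a j i) (c := p j i)
    have := card_le_of_subset_union_sinks hT
    omega
  refine .cons ⟨by simp [strategyState, isSource_iff], hcard _ ?_, rfl⟩ <| .cons
    (PRBPStep.pcompute_of_notMem (E_a_p j i) ?_ ?_ ?_ ?_ ?_ (hcard _ ?_)) <| .cons
    (PRBPStep.pcompute_of_notMem (E_x_p j i) ?_ ?_ ?_ ?_ ?_ (hcard _ ?_)) <| .cons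
    (.inl ⟨?_, rfl⟩) <| .cons
    (PRBPStep.pcompute_of_notMem (E_p_y j i) ?_ ?_ ?_ ?_ ?_ (hcard _ ?_)) <| .cons
    (.inr ⟨?_, ?_, ?_⟩) (.nil _)
  all_goals simp [strategyState, doneEdges, productEdges, PRBPState.red, Finset.subset_iff,
    isSource_iff, E_iff, hji]
  constructor <;> ext <;> simp <;> aesop

theorem reaches_columnMoves (hr : m + 3 ≤ r) {F : Finset (Fin m × Fin m)} {i : Fin m}
    (hF : ∀ j, (j, i) ∉ F) :
    PRBPReaches (MVG m) r (strategyState ∅ F) (columnMoves i)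
      (strategyState ∅ (F ∪ Finset.univ ×ˢ {i})) := by
  have hentries := PRBPReaches.flatMap (G := MVG m) (r := r) (entryMoves · i)
    (fun l => strategyState {x i} (F ∪ l.toFinset ×ˢ {i})) (List.finRange m)
    fun l₁ j l₂ hl => by
      have hj : j ∉ l₁ := by
        have := List.nodup_finRange m
        rw [hl, List.nodup_append] at this
        exact fun h => this.2.2 j h j List.mem_cons_self rfl
      convert reaches_entryMoves hr (F := F ∪ l₁.toFinset ×ˢ {i}) (j := j) (i := i)
        (by simp [hF, hj]) using 2
      ext ⟨j', i'⟩
      simp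
  simp only [List.toFinset_nil, Finset.empty_product, Finset.union_empty,
    List.toFinset_finRange] at hentries
  refine .cons ⟨by simp [strategyState, isSource_iff], ?_, ?_⟩ <|
    hentries.append (.cons (.inl ⟨by simp [strategyState], rfl⟩) ?_)
  · refine (card_le_of_subset_union_sinks (U := {x i}) ?_).trans (by simp; omega)
    intro v
    simp [strategyState]
    aesop
  · simp [strategyState]
  · simpa [strategyState] using .nil _

theorem reaches_columns (hr : m + 3 ≤ r) :
    PRBPReaches (MVG m) r (strategyState ∅ ∅) ((List.finRange m).flatMap columnMoves)
      (strategyState ∅ Finset.univ) := by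
  have := PRBPReaches.flatMap (G := MVG m) (r := r) columnMoves
    (fun c => strategyState ∅ (Finset.univ ×ˢ c.toFinset)) (List.finRange m)
    fun l₁ i l₂ hl => by
      have hi : i ∉ l₁ := by
        have := List.nodup_finRange m
        rw [hl, List.nodup_append] at this
        exact fun h => this.2.2 i h i List.mem_cons_self rfl
      convert reaches_columnMoves hr (F := Finset.univ ×ˢ l₁.toFinset) (i := i)
        (by simp [hi]) using 2
      ext ⟨j', i'⟩
      simp
      tauto
  simpa using this

theorem strategy_valid (hr : m + 3 ≤ r) : PRBPValid (MVG m) r (strategy m) := by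
  have hinit : PRBPInit (MVG m) = strategyState ∅ ∅ := by
    simp [PRBPInit, strategyState, doneEdges]
  refine ⟨_, hinit ▸ (reaches_columns hr).append (PRBPReaches.saves
    ((List.nodup_finRange m).map fun _ _ h => by simpa using h)
    (by simpa [strategyState] using fun j => ⟨j⟩)), ?_, ?_⟩
  · simp [isSink_iff]
  · intro u v huv
    rcases E_iff.1 huv with ⟨j, i, rfl, rfl⟩ | ⟨j, i, rfl, rfl⟩ | ⟨j, i, rfl, rfl⟩ <;>
      simp [strategyState, doneEdges, productEdges]

theorem strategy_cost : PRBPCost (strategy m) = m ^ 2 + 2 * m := by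
  simp [PRBPCost, strategy, columnMoves, entryMoves, PRBPMove.ioCost, List.flatMap,
    List.map_flatten, List.sum_flatten, Function.comp_def]
  ring

theorem optPRBP_eq (hr : m + 3 ≤ r) : optPRBP (MVG m) r = ((m ^ 2 + 2 * m : ℕ) : ℕ∞) := by
  refine le_antisymm (strategy_cost (m := m) ▸ optPRBP_le_cost (strategy_valid hr))
    (le_optPRBP_of_forall fun L hL => ?_)
  have := hL.card_sources_add_card_sinks_le noIsolated
  rw [card_sources, card_sinks] at this
  omega

end Strategy

section RBPLowerBound

variable {L : List (RBPMove (MVNode m))}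

theorem two_mul_add_one_le_card {j j' : Fin m} (hjj' : j ≠ j') {R : Finset (MVNode m)}
    (hy : y j ∈ R) (hp : ∀ i, p j i ∈ R) (hcover : ∀ i, p j' i ∈ R ∨ x i ∈ R) :
    2 * m + 1 ≤ R.card := by
  let f : Option (Fin m ⊕ Fin m) → MVNode m
    | none => y j
    | some (.inl i) => p j i
    | some (.inr i) => if p j' i ∈ R then p j' i else x i
  have hf : Set.MapsTo f (Finset.univ : Finset (Option (Fin m ⊕ Fin m))) R := by
    rintro (_ | i | i) -
    · exact hy
    · exact hp i
    · simp only [f]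
      split_ifs with h
      · exact h
      · exact (hcover i).resolve_left h
  have hinj : Set.InjOn f (Finset.univ : Finset (Option (Fin m ⊕ Fin m))) := by
    rintro (_ | i | i) - (_ | i' | i') - h <;> simp only [f] at h <;>
      (try split_ifs at h) <;> simp [hjj', Ne.symm hjj'] at h ⊢ <;> exact h
  simpa [two_mul, add_assoc] using Finset.card_le_card_of_injOn f hf hinj

theorem exists_load_between_computes (hr : r ≤ 2 * m) (hL : RBPLegal (MVG m) r L)
    {s t : ℕ} {j j' : Fin m} (hs : L[s]? = some (.compute (y j)))
    (ht : L[t]? = some (.compute (y j'))) (hst : s < t) (hjj' : j ≠ j') :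
    ∃ k, s < k ∧ k < t ∧ ∃ v, (∀ j i, v ≠ a j i) ∧ L[k]? = some (.load v) := by
  by_contra! hnone
  obtain ⟨-, -, hin, hcard⟩ := hL s _ hs
  set S := rbpTrace (RBPInit (MVG m)) L
  have hred : (S (s + 1)).red = insert (y j) (S s).red := by
    simp only [S, rbpTrace_succ, hs, Option.elim_some]
    rfl
  have hcompute : ∀ {w c}, w ∉ (S (s + 1)).red → s + 1 ≤ c → c ≤ t →
      w ∈ (S c).red → (∀ j i, w ≠ a j i) →
      ∃ k, s < k ∧ k < c ∧ L[k]? = some (.compute w) := by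
    intro w c hw hsc hct hwc hwa
    obtain ⟨k, hsk, hkc, hk | hk⟩ := exists_load_or_compute_of_mem_red hsc hw hwc
    · exact absurd hk (hnone k (by omega) (by omega) w hwa)
    · exact ⟨k, by omega, hkc, hk⟩
  have hcover : ∀ i, p j' i ∈ (S (s + 1)).red ∨ x i ∈ (S (s + 1)).red := by
    intro i
    by_contra! h
    obtain ⟨k, hsk, hkt, hk⟩ := hcompute h.1 hst le_rfl ((hL t _ ht).2.2.1 _ (E_p_y j' i))
      (by simp)
    obtain ⟨k', -, -, hk'⟩ := hcompute h.2 hsk hkt.le ((hL k _ hk).2.2.1 _ (E_x_p j' i))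
      (by simp)
    exact (hL k' _ hk').1 (isSource_x i)
  have := two_mul_add_one_le_card hjj' (hred ▸ Finset.mem_insert_self _ _)
    (fun i => hred ▸ Finset.mem_insert_of_mem (hin _ (E_p_y j i))) hcover
  rw [hred] at this
  omega

theorem exists_save_y (hL : RBPValid (MVG m) r L) (j : Fin m) :
    ∃ k : ℕ, L[k]? = some (.save (y j)) :=
  hL.exists_save (isSink_iff.2 ⟨j, rfl⟩) (not_isSource_y j)

theorem exists_compute_y (hL : RBPValid (MVG m) r L) (j : Fin m) :
    ∃ k : ℕ, L[k]? = some (.compute (y j)) := by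
  obtain ⟨k, hk⟩ := exists_save_y hL j
  obtain ⟨c, -, hc⟩ :=
    hL.legal.exists_compute_of_not_isSource (not_isSource_y j) (hL.legal k _ hk)
  exact ⟨c, hc⟩

theorem le_card_positions_save (hL : RBPValid (MVG m) r L) :
    m ≤ (L.positions fun mv => ∃ j, mv = .save (y j)).card := by
  choose g hg using exists_save_y hL
  simpa using List.card_le_card_of_getElem? (fun j j' h => by simpa using h) hg
    fun j => List.mem_positions.2 ⟨_, hg j, j, rfl⟩

theorem sq_le_card_positions_load_a (hL : RBPValid (MVG m) r L) :
    m ^ 2 ≤ (L.positions fun mv => ∃ j i, mv = .load (a j i)).card := by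
  choose c hc using exists_compute_y hL
  choose f hf using fun ji : Fin m × Fin m =>
    hL.legal.exists_load_before_compute (isSource_a ji.1 ji.2) (transGen_a_y ji.1 ji.2) (hc ji.1)
  simpa [sq] using List.card_le_card_of_getElem? (fun ji ji' h => by simpa [Prod.ext_iff] using h)
    (fun ji => (hf ji).2) fun ji => List.mem_positions.2 ⟨_, (hf ji).2, ji.1, ji.2, rfl⟩

theorem two_mul_sub_one_le_card_positions_load (hm : 0 < m) (hr : r ≤ 2 * m)
    (hL : RBPValid (MVG m) r L) :
    2 * m - 1 ≤ (L.positions fun mv => ∃ v, (∀ j i, v ≠ a j i) ∧ mv = .load v).card := by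
  set Q := L.positions fun mv => ∃ v, (∀ j i, v ≠ a j i) ∧ mv = .load v
  choose c hc using exists_compute_y hL
  have hc_inj : c.Injective := List.injective_of_getElem? (fun j j' h => by simpa using h) hc
  obtain ⟨j₀, -, hj₀⟩ :=
    Finset.exists_min_image Finset.univ c ⟨⟨0, hm⟩, Finset.mem_univ _⟩
  choose f hf_lt hf using fun i =>
    hL.legal.exists_load_before_compute (isSource_x i) (transGen_x_y j₀ i) (hc j₀)
  have hbefore : m ≤ (Q.filter (· < c j₀)).card := by
    simpa using List.card_le_card_of_getElem? (fun i i' h => by simpa using h) hf fun i =>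
      Finset.mem_filter.2 ⟨List.mem_positions.2 ⟨_, hf i, x i, by simp, rfl⟩, hf_lt i⟩
  have hafter : m ≤ (Q.filter fun k => c j₀ < k ∧ k < L.length).card + 1 := by
    have := Finset.card_le_card_filter_between_add_one (T := Finset.univ.image c) (Q := Q)
      (lo := c j₀) (hi := L.length) (by
        simp only [Finset.mem_image, Finset.mem_univ, true_and, forall_exists_index,
          forall_apply_eq_imp_iff]
        exact fun j => ⟨hj₀ j (Finset.mem_univ _),
          (List.getElem?_eq_some_iff.1 (hc j)).1.le⟩) (by
        simp only [Finset.mem_image, Finset.mem_univ, true_and, forall_exists_index,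
          forall_apply_eq_imp_iff]
        intro j j' hjj'
        obtain ⟨k, hk, hk', v, hv, hkv⟩ := exists_load_between_computes hr hL.legal
          (hc j) (hc j') hjj' fun h => hjj'.ne (congrArg c h)
        exact ⟨k, List.mem_positions.2 ⟨_, hkv, v, hv, rfl⟩, hk, hk'⟩)
    rwa [Finset.card_image_of_injective _ hc_inj, Finset.card_univ, Fintype.card_fin] at this
  have hsplit : (Q.filter (· < c j₀)).card + (Q.filter fun k => c j₀ < k ∧ k < L.length).card
      ≤ Q.card := by
    rw [← Finset.card_union_of_disjoint (Finset.disjoint_filter.2 fun k _ h₁ h₂ => by omega)]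
    exact Finset.card_le_card (Finset.union_subset (Finset.filter_subset _ _)
      (Finset.filter_subset _ _))
  omega

theorem le_RBPCost (hm : 0 < m) (hr : r ≤ 2 * m) (hL : RBPValid (MVG m) r L) :
    m ^ 2 + 3 * m - 1 ≤ RBPCost L := by
  have hcost := L.card_positions_le_sum_map (f := RBPMove.ioCost)
    (p := fun mv => (∃ j i, mv = .load (a j i)) ∨ (∃ j, mv = .save (y j)) ∨
      ∃ v, (∀ j i, v ≠ a j i) ∧ mv = .load v)
    (by rintro _ (⟨_, _, rfl⟩ | ⟨_, rfl⟩ | ⟨_, _, rfl⟩) <;> rfl)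
  rw [List.card_positions_or (by aesop), List.card_positions_or (by aesop)] at hcost
  have := sq_le_card_positions_load_a hL
  have := le_card_positions_save hL
  have := two_mul_sub_one_le_card_positions_load hm hr hL
  unfold RBPCost
  omega

theorem le_optRBP (hm : 0 < m) (hr : r ≤ 2 * m) :
    ((m ^ 2 + 3 * m - 1 : ℕ) : ℕ∞) ≤ optRBP (MVG m) r :=
  le_optRBP_of_forall fun _ hL => le_RBPCost hm hr hL

end RBPLowerBound

end MVG

theorem matvec_costs_general (m r : ℕ) (hr₁ : m + 3 ≤ r) (hr₂ : r ≤ 2 * m) :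
    optPRBP (MVG m) r = ((m ^ 2 + 2 * m : ℕ) : ℕ∞) ∧
    ((m ^ 2 + 3 * m - 1 : ℕ) : ℕ∞) ≤ optRBP (MVG m) r ∧
    optPRBP (MVG m) r < optRBP (MVG m) r := by
  have hprbp := MVG.optPRBP_eq hr₁
  have hrbp := MVG.le_optRBP (by omega) hr₂
  refine ⟨hprbp, hrbp, hprbp ▸ lt_of_lt_of_le ?_ hrbp⟩
  exact_mod_cast (by omega : m ^ 2 + 2 * m < m ^ 2 + 3 * m - 1)

/-- for `m ≥ 3` and `m + 3 ≤ r ≤ 2m`, the matrix-vector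
multiplication DAG has `OPT_PRBP = m² + 2m` (the trivial cost) while
`OPT_RBP ≥ m² + 3m − 1`; in particular `OPT_PRBP < OPT_RBP`. -/
theorem matvec_costs (m r : ℕ) (hm : 3 ≤ m) (hr₁ : m + 3 ≤ r) (hr₂ : r ≤ 2 * m) :
    optPRBP (MVG m) r = ((m ^ 2 + 2 * m : ℕ) : ℕ∞) ∧
    ((m ^ 2 + 3 * m - 1 : ℕ) : ℕ∞) ≤ optRBP (MVG m) r ∧
    optPRBP (MVG m) r < optRBP (MVG m) r :=
  matvec_costs_general m r hr₁ hr₂
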